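/- arXiv:2212.08844 — 2 statements merged into one kernel-verified Lean document; each statement's English description precedes it below -/
import Mathlib

section
/- AP property of the projection step: if J_i* = i n_i^{k+1} u* + O(ε) for each i, then in the projection relation (1 + Σ_i c_i(ε) i n_i^{k+1}) u^{k+1} + Δt∇_x p^{k+1} = u* + Σ_i c_i(ε) J_i*, with c_i(ε) = (ακ/(i^{2/3}ε))/(1/Δt + α/(i^{2/3}ε)), one has lim_{ε→0} c_i(ε) = κ, so as ε → 0 the relation converges to (1 + κΣ_i i n_i^{k+1}) u^{k+1} + Δt∇_x p^{k+1} = u* + κΣ_i i n_i^{k+1} u*, equivalently u^{k+1} + (Δt/(1+κΣ_i i n_i^{k+1}))∇_x p^{k+1} = u*. -/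
open Real Filter Topology

abbrev E (d : ℕ) := EuclideanSpace ℝ (Fin d)

noncomputable def pdx {d : ℕ} (g : E d → ℝ) (j : Fin d) (x : E d) : ℝ :=
  fderiv ℝ g x (EuclideanSpace.single j 1)

noncomputable def gradX {d : ℕ} (g : E d → ℝ) (x : E d) : E d := WithLp.toLp 2 (fun j => pdx g j x)

/-- The coefficient `c_i(ε) = (ακ/(i^{2/3}ε)) / (1/Δt + α/(i^{2/3}ε))`
(species `i : Fin N` has size `i+1`). -/
noncomputable def coefc (Δt κ α : ℝ) {N : ℕ} (i : Fin N) (ε : ℝ) : ℝ :=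
  (α * κ / (((i : ℝ) + 1) ^ ((2:ℝ)/3) * ε)) / (1 / Δt + α / (((i : ℝ) + 1) ^ ((2:ℝ)/3) * ε))

lemma coefc_aux (Δt κ α a ε : ℝ) (hΔt : 0 < Δt) (hα : 0 < α) (ha : 0 < a) (hε : 0 < ε) :
    (α * κ / (a * ε)) / (1 / Δt + α / (a * ε)) = α * κ / (a * ε / Δt + α) := by
  have h1 : (1 / Δt + α / (a * ε)) ≠ 0 := by positivity
  have h2 : (a * ε / Δt + α) ≠ 0 := by positivity
  field_simp

/-- AP property of the projection step. As `ε → 0⁺`, `c_i(ε) → κ`, and the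
projection relation converges to the projection step of the limiting system:
`(1 + κΣ i n_i) u^{k+1} + Δt∇p = u* + κΣ i n_i u*`. -/
theorem projection_step_AP
    (d N : ℕ) (hd : 1 ≤ d) (hN : 1 ≤ N)
    (Δt κ α : ℝ) (hΔt : 0 < Δt) (hκ : 0 < κ) (hα : 0 < α ∧ α < 1)
    (nkp : Fin N → E d → ℝ) (hn : ∀ i x, 0 ≤ nkp i x)
    (us ukp : ℝ → E d → E d) (p : ℝ → E d → ℝ) (J : Fin N → ℝ → E d → E d)
    (us0 ukp0 gp0 : E d → E d)
    -- the projection relation, for each ε > 0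
    (hrel : ∀ ε : ℝ, 0 < ε → ∀ x : E d,
      (1 + ∑ i : Fin N, coefc Δt κ α i ε * (((i : ℝ) + 1) * nkp i x)) • ukp ε x
          + Δt • gradX (p ε) x
        = us ε x + ∑ i : Fin N, (coefc Δt κ α i ε) • J i ε x)
    -- J_i*(ε) = i n_i u*(ε) + O(ε)
    (hO : ∀ (i : Fin N) (x : E d), ∃ C δ : ℝ, 0 < δ ∧ ∀ ε ∈ Set.Ioc (0:ℝ) δ,
      ‖J i ε x - ((((i : ℝ) + 1)) * nkp i x) • us ε x‖ ≤ C * ε)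
    -- all quantities converge as ε → 0⁺
    (hus : ∀ x, Tendsto (fun ε => us ε x) (𝓝[>] (0:ℝ)) (𝓝 (us0 x)))
    (hukp : ∀ x, Tendsto (fun ε => ukp ε x) (𝓝[>] (0:ℝ)) (𝓝 (ukp0 x)))
    (hgp : ∀ x, Tendsto (fun ε => gradX (p ε) x) (𝓝[>] (0:ℝ)) (𝓝 (gp0 x))) :
    -- conclusions: c_i(ε) → κ and the limiting projection relation
    (∀ i : Fin N, Tendsto (coefc Δt κ α i) (𝓝[>] (0:ℝ)) (𝓝 κ)) ∧
    (∀ x : E d,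
      (1 + κ * ∑ i : Fin N, ((i : ℝ) + 1) * nkp i x) • ukp0 x + Δt • gp0 x
        = us0 x + (κ * ∑ i : Fin N, ((i : ℝ) + 1) * nkp i x) • us0 x) := by
  have hcoef : ∀ i : Fin N, Tendsto (coefc Δt κ α i) (𝓝[>] (0:ℝ)) (𝓝 κ) := by
    intro i
    set a : ℝ := ((i : ℝ) + 1) ^ ((2:ℝ)/3) with ha_def
    have ha : 0 < a := Real.rpow_pos_of_pos (by positivity) _
    have heq : ∀ ε ∈ Set.Ioi (0:ℝ), coefc Δt κ α i ε = α * κ / (a * ε / Δt + α) := by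
      intro ε hε
      exact coefc_aux Δt κ α a ε hΔt hα.1 ha hε
    have hlim : Tendsto (fun ε : ℝ => α * κ / (a * ε / Δt + α)) (𝓝[>] (0:ℝ)) (𝓝 κ) := by
      have hden : Tendsto (fun ε : ℝ => a * ε / Δt + α) (𝓝[>] (0:ℝ)) (𝓝 α) := by
        have : Tendsto (fun ε : ℝ => a * ε / Δt + α) (𝓝 (0:ℝ)) (𝓝 (a * 0 / Δt + α)) := by
          apply Tendsto.add _ tendsto_const_nhds
          exact ((tendsto_const_nhds.mul tendsto_id).div_const Δt)
        simpa using this.mono_left nhdsWithin_le_nhds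
      have h2 : Tendsto (fun ε : ℝ => (α * κ) / (a * ε / Δt + α)) (𝓝[>] (0:ℝ))
          (𝓝 ((α * κ) / α)) :=
        Tendsto.div (tendsto_const_nhds (x := α * κ)) hden (ne_of_gt hα.1)
      have h3 : (α * κ) / α = κ := by
        rw [mul_comm, mul_div_assoc, div_self (ne_of_gt hα.1), mul_one]
      rwa [h3] at h2
    exact hlim.congr' (eventuallyEq_nhdsWithin_of_eqOn fun ε hε => (heq ε hε).symm)
  refine ⟨hcoef, fun x => ?_⟩
  have hJ : ∀ i : Fin N, Tendsto (fun ε => J i ε x) (𝓝[>] (0:ℝ))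
      (𝓝 ((((i : ℝ) + 1) * nkp i x) • us0 x)) := by
    intro i
    obtain ⟨C, δ, hδ, hC⟩ := hO i x
    have hdiff : Tendsto (fun ε => J i ε x - (((i : ℝ) + 1) * nkp i x) • us ε x)
        (𝓝[>] (0:ℝ)) (𝓝 0) := by
      have hb : Tendsto (fun ε : ℝ => C * ε) (𝓝[>] (0:ℝ)) (𝓝 0) := by
        have : Tendsto (fun ε : ℝ => C * ε) (𝓝 (0:ℝ)) (𝓝 (C * 0)) :=
          tendsto_const_nhds.mul tendsto_id
        simpa using this.mono_left nhdsWithin_le_nhds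
      apply squeeze_zero_norm' _ hb
      filter_upwards [Ioc_mem_nhdsGT hδ] with ε hε using hC ε hε
    have hmul : Tendsto (fun ε => (((i : ℝ) + 1) * nkp i x) • us ε x) (𝓝[>] (0:ℝ))
        (𝓝 ((((i : ℝ) + 1) * nkp i x) • us0 x)) := (hus x).const_smul _
    have := hdiff.add hmul
    simpa using this
  have hLHS : Tendsto (fun ε =>
      (1 + ∑ i : Fin N, coefc Δt κ α i ε * (((i : ℝ) + 1) * nkp i x)) • ukp ε x
        + Δt • gradX (p ε) x) (𝓝[>] (0:ℝ))
      (𝓝 ((1 + κ * ∑ i : Fin N, ((i : ℝ) + 1) * nkp i x) • ukp0 x + Δt • gp0 x)) := by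
    apply Tendsto.add _ ((hgp x).const_smul Δt)
    apply Tendsto.smul _ (hukp x)
    have hsum : Tendsto (fun ε => ∑ i : Fin N, coefc Δt κ α i ε * (((i : ℝ) + 1) * nkp i x))
        (𝓝[>] (0:ℝ)) (𝓝 (∑ i : Fin N, κ * (((i : ℝ) + 1) * nkp i x))) :=
      tendsto_finset_sum _ fun i _ => (hcoef i).mul tendsto_const_nhds
    have h4 := (tendsto_const_nhds (x := (1:ℝ))).add hsum
    simpa [Finset.mul_sum] using h4
  have hRHS : Tendsto (fun ε =>
      us ε x + ∑ i : Fin N, (coefc Δt κ α i ε) • J i ε x) (𝓝[>] (0:ℝ))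
      (𝓝 (us0 x + (κ * ∑ i : Fin N, ((i : ℝ) + 1) * nkp i x) • us0 x)) := by
    apply Tendsto.add (hus x)
    have hsum : Tendsto (fun ε => ∑ i : Fin N, (coefc Δt κ α i ε) • J i ε x)
        (𝓝[>] (0:ℝ)) (𝓝 (∑ i : Fin N, κ • ((((i : ℝ) + 1) * nkp i x) • us0 x))) :=
      tendsto_finset_sum _ fun i _ => (hcoef i).smul (hJ i)
    have heq : (∑ i : Fin N, κ • ((((i : ℝ) + 1) * nkp i x) • us0 x))
        = (κ * ∑ i : Fin N, ((i : ℝ) + 1) * nkp i x) • us0 x := by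
      rw [Finset.mul_sum, Finset.sum_smul]
      refine Finset.sum_congr rfl fun i _ => ?_
      rw [smul_smul]
    rwa [heq] at hsum
  have heq : (fun ε =>
      (1 + ∑ i : Fin N, coefc Δt κ α i ε * (((i : ℝ) + 1) * nkp i x)) • ukp ε x
        + Δt • gradX (p ε) x) =ᶠ[𝓝[>] (0:ℝ)]
      (fun ε => us ε x + ∑ i : Fin N, (coefc Δt κ α i ε) • J i ε x) :=
    eventuallyEq_nhdsWithin_of_eqOn fun ε hε => hrel ε hε x
  exact tendsto_nhds_unique (hLHS.congr' heq) hRHS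
end

section
/- The discrete transformed Fokker–Planck operator is symmetric: the matrix representing the map h ↦ L̃h, where (L̃h)_{m,m'} = (1/Δv²)(h_{m,m'+1} + h_{m+1,m'} + h_{m,m'−1} + h_{m−1,m'} − M̄_{m,m'} h_{m,m'}) with M̄_{m,m'} = (√M_{m+1,m'} + √M_{m,m'+1} + √M_{m−1,m'} + √M_{m,m'−1})/√M_{m,m'} and homogeneous (zero) ghost values outside the grid, is a symmetric matrix on ℝ^{(2M)²}. -/
open Real

/-- The weight `M̄_{m,m'} = (√M_{m+1,m'} + √M_{m,m'+1} + √M_{m−1,m'} + √M_{m,m'−1})/√M_{m,m'}`. -/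
noncomputable def Mbar (Mwt : ℤ → ℤ → ℝ) (m m' : ℤ) : ℝ :=
  (Real.sqrt (Mwt (m+1) m') + Real.sqrt (Mwt m (m'+1))
    + Real.sqrt (Mwt (m-1) m') + Real.sqrt (Mwt m (m'-1))) / Real.sqrt (Mwt m m')

/-- The discrete transformed Fokker–Planck operator (five-point formula). -/
noncomputable def Ldisc (Δv : ℝ) (Mwt : ℤ → ℤ → ℝ) (h : ℤ → ℤ → ℝ) (m m' : ℤ) : ℝ :=
  (1 / Δv ^ 2) * (h m (m'+1) + h (m+1) m' - Mbar Mwt m m' * h m m'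
    + h m (m'-1) + h (m-1) m')

/-!
`L̃` is `1 / Δv²` times the difference of the grid adjacency operator (sum over the four
neighbours) and the diagonal multiplication by `M̄`. The diagonal part is trivially symmetric. The adjacency part is a sum of
shifts by `±1` in each coordinate, and summation by parts moves a shift by `+1` on `h` to a shift
by `-1` on `g`: the boundary terms it produces are ghost values, which vanish.
-/

open Finset

theorem sum_Icc_mul_shift {R : Type*} [NonUnitalNonAssocSemiring R] {N : ℤ} {F G : ℤ → R}
    (hF : F (N + 1) = 0) (hG : G 0 = 0) :
    ∑ k ∈ Icc 1 N, F (k + 1) * G k = ∑ k ∈ Icc 1 N, F k * G (k - 1) := by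
  have extend_left : ∑ k ∈ Icc 1 N, F (k + 1) * G k = ∑ k ∈ Icc 0 N, F (k + 1) * G k :=
    sum_subset (Icc_subset_Icc_left zero_le_one) fun k hk hk' => by
      obtain rfl : k = 0 := by simp only [mem_Icc] at hk hk'; omega
      rw [hG, mul_zero]
  have extend_right : ∑ k ∈ Icc 1 N, F k * G (k - 1) = ∑ k ∈ Icc 1 (N + 1), F k * G (k - 1) :=
    sum_subset (Icc_subset_Icc_right (Int.le_add_one le_rfl)) fun k hk hk' => by
      obtain rfl : k = N + 1 := by simp only [mem_Icc] at hk hk'; omega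
      rw [hF, zero_mul]
  rw [extend_left, extend_right, show Icc (1 : ℤ) (N + 1) = (Icc 0 N).image (· + 1) by
      rw [image_add_right_Icc, zero_add],
    sum_image fun _ _ _ _ => add_right_cancel]
  simp

theorem sum_Icc_adjacent_mul_comm {R : Type*} [NonUnitalCommSemiring R] {N : ℤ} {F G : ℤ → R}
    (hF₀ : F 0 = 0) (hF : F (N + 1) = 0) (hG₀ : G 0 = 0) (hG : G (N + 1) = 0) :
    ∑ k ∈ Icc 1 N, (F (k + 1) + F (k - 1)) * G k
      = ∑ k ∈ Icc 1 N, F k * (G (k + 1) + G (k - 1)) := by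
  have down : ∑ k ∈ Icc 1 N, F (k - 1) * G k = ∑ k ∈ Icc 1 N, F k * G (k + 1) := by
    simpa only [mul_comm (G _)] using (sum_Icc_mul_shift hG hF₀).symm
  simp only [add_mul, mul_add, sum_add_distrib]
  rw [sum_Icc_mul_shift hF hG₀, down, add_comm]

def neighbourSum {R : Type*} [Add R] (h : ℤ → ℤ → R) (m m' : ℤ) : R :=
  (h m (m' + 1) + h m (m' - 1)) + (h (m + 1) m' + h (m - 1) m')

theorem sum_Icc_neighbourSum_mul_comm {R : Type*} [NonUnitalCommSemiring R] {N : ℤ}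
    {h g : ℤ → ℤ → R}
    (hh : ∀ m m' : ℤ, (m < 1 ∨ N < m ∨ m' < 1 ∨ N < m') → h m m' = 0)
    (hg : ∀ m m' : ℤ, (m < 1 ∨ N < m ∨ m' < 1 ∨ N < m') → g m m' = 0) :
    ∑ m ∈ Icc 1 N, ∑ m' ∈ Icc 1 N, neighbourSum h m m' * g m m'
      = ∑ m ∈ Icc 1 N, ∑ m' ∈ Icc 1 N, h m m' * neighbourSum g m m' := by
  have along_snd (m : ℤ) : ∑ m' ∈ Icc 1 N, (h m (m' + 1) + h m (m' - 1)) * g m m'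
      = ∑ m' ∈ Icc 1 N, h m m' * (g m (m' + 1) + g m (m' - 1)) :=
    sum_Icc_adjacent_mul_comm (hh _ _ (by omega)) (hh _ _ (by omega))
      (hg _ _ (by omega)) (hg _ _ (by omega))
  have along_fst (m' : ℤ) : ∑ m ∈ Icc 1 N, (h (m + 1) m' + h (m - 1) m') * g m m'
      = ∑ m ∈ Icc 1 N, h m m' * (g (m + 1) m' + g (m - 1) m') :=
    sum_Icc_adjacent_mul_comm (F := (h · m')) (G := (g · m')) (hh _ _ (by omega))
      (hh _ _ (by omega)) (hg _ _ (by omega)) (hg _ _ (by omega))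
  simp only [neighbourSum, add_mul (_ + _), mul_add (h _ _) (_ + _), sum_add_distrib, along_snd]
  congr 1
  rw [sum_comm]
  simp only [along_fst]
  exact sum_comm

theorem Ldisc_eq (Δv : ℝ) (Mwt h : ℤ → ℤ → ℝ) (m m' : ℤ) :
    Ldisc Δv Mwt h m m' = (1 / Δv ^ 2) * (neighbourSum h m m' - Mbar Mwt m m' * h m m') := by
  unfold Ldisc neighbourSum
  ring

theorem discrete_Ltilde_symmetric_general
    (Δv : ℝ) (M : ℕ) (Mwt : ℤ → ℤ → ℝ)
    (h g : ℤ → ℤ → ℝ)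
    (hh : ∀ m m' : ℤ, (m < 1 ∨ (2*M : ℤ) < m ∨ m' < 1 ∨ (2*M : ℤ) < m') → h m m' = 0)
    (hg : ∀ m m' : ℤ, (m < 1 ∨ (2*M : ℤ) < m ∨ m' < 1 ∨ (2*M : ℤ) < m') → g m m' = 0) :
    ∑ m ∈ Finset.Icc (1:ℤ) (2*M), ∑ m' ∈ Finset.Icc (1:ℤ) (2*M),
        Ldisc Δv Mwt h m m' * g m m'
      = ∑ m ∈ Finset.Icc (1:ℤ) (2*M), ∑ m' ∈ Finset.Icc (1:ℤ) (2*M),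
        h m m' * Ldisc Δv Mwt g m m' := by
  set c := 1 / Δv ^ 2
  have split_left (m m' : ℤ) : Ldisc Δv Mwt h m m' * g m m'
      = c * (neighbourSum h m m' * g m m') - c * (Mbar Mwt m m' * h m m' * g m m') := by
    rw [Ldisc_eq]; ring
  have split_right (m m' : ℤ) : h m m' * Ldisc Δv Mwt g m m'
      = c * (h m m' * neighbourSum g m m') - c * (Mbar Mwt m m' * h m m' * g m m') := by
    rw [Ldisc_eq]; ring
  simp only [split_left, split_right, sum_sub_distrib, ← mul_sum,
    sum_Icc_neighbourSum_mul_comm hh hg]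

/-- the discrete transformed Fokker–Planck operator, with zero ghost values
outside the `(2M)×(2M)` grid `{1,…,2M}²`, is a symmetric matrix:
`⟨L̃h, g⟩ = ⟨h, L̃g⟩` for the standard Euclidean inner product. -/
theorem discrete_Ltilde_symmetric
    (Δv : ℝ) (hΔv : 0 < Δv) (M : ℕ) (hM : 1 ≤ M) (Mwt : ℤ → ℤ → ℝ)
    (hMpos : ∀ m m' : ℤ, 0 ≤ m → m ≤ 2*M+1 → 0 ≤ m' → m' ≤ 2*M+1 → 0 < Mwt m m')
    (h g : ℤ → ℤ → ℝ)
    (hh : ∀ m m' : ℤ, (m < 1 ∨ (2*M : ℤ) < m ∨ m' < 1 ∨ (2*M : ℤ) < m') → h m m' = 0)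
    (hg : ∀ m m' : ℤ, (m < 1 ∨ (2*M : ℤ) < m ∨ m' < 1 ∨ (2*M : ℤ) < m') → g m m' = 0) :
    ∑ m ∈ Finset.Icc (1:ℤ) (2*M), ∑ m' ∈ Finset.Icc (1:ℤ) (2*M),
        Ldisc Δv Mwt h m m' * g m m'
      = ∑ m ∈ Finset.Icc (1:ℤ) (2*M), ∑ m' ∈ Finset.Icc (1:ℤ) (2*M),
        h m m' * Ldisc Δv Mwt g m m' :=
  discrete_Ltilde_symmetric_general Δv M Mwt h g hh hg
end
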